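/- arXiv:2308.03787 — 5 statements merged into one kernel-verified Lean document; each statement's English description precedes it below -/
import Mathlib

section
/- Let V = (v₁,…,vₙ) be a convex n-gon in ℝ² (indices mod n) with vertices in general position, and let uᵢ be the intersection of the diagonals (v_{i−1}v_{i+1}) and (v_i v_{i+2}), so uᵢ = Aᵢvᵢ + Bᵢv_{i+2} = Cᵢv_{i−1} + Dᵢv_{i+1} with Aᵢ, Bᵢ, Cᵢ, Dᵢ as defined. Then [uᵢ−u_{i+1}, u_{i+1}−u_{i+2}] / [u_{i−1}−u_{i+1}, u_{i+1}−u_{i+2}] = Cᵢ / A_{i−1}. That is, the pentagram map transforms the ratio Cᵢ/Aᵢ into Cᵢ/A_{i−1}. -/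
/-!
Both u_{i+1} and u_{i+2} lie on the diagonal v_{i+1}v_{i+3}, so u_{i+1} - u_{i+2} is a multiple
k·q of q = v_{i+1} - v_{i+3}. Writing p = v_{i-1} - v_{i+1}, the vectors u_i - u_{i+1} and
u_{i-1} - u_{i+1} are C_i·p + B_{i+1}·q and A_{i-1}·p + B_{i+1}·q. In both brackets with k·q the
q-component drops out, leaving C_i·k·[p,q] over A_{i-1}·k·[p,q].
-/

noncomputable section

/-- The 2×2 determinant [u,v] = u₁v₂ − u₂v₁. -/
def det2 (u v : ℝ × ℝ) : ℝ := u.1 * v.2 - u.2 * v.1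

/-- A_i = [v_{i-1}-v_{i+1}, v_{i+1}-v_{i+2}] / [v_{i-1}-v_{i+1}, v_i-v_{i+2}]. -/
def Acoef (v : ℤ → ℝ × ℝ) (i : ℤ) : ℝ :=
  det2 (v (i-1) - v (i+1)) (v (i+1) - v (i+2)) / det2 (v (i-1) - v (i+1)) (v i - v (i+2))

/-- B_i = [v_{i-1}-v_i, v_i-v_{i+1}] / [v_{i-1}-v_{i+1}, v_i-v_{i+2}]. -/
def Bcoef (v : ℤ → ℝ × ℝ) (i : ℤ) : ℝ :=
  det2 (v (i-1) - v i) (v i - v (i+1)) / det2 (v (i-1) - v (i+1)) (v i - v (i+2))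

/-- C_i = [v_i-v_{i+1}, v_{i+1}-v_{i+2}] / [v_{i-1}-v_{i+1}, v_i-v_{i+2}]. -/
def Ccoef (v : ℤ → ℝ × ℝ) (i : ℤ) : ℝ :=
  det2 (v i - v (i+1)) (v (i+1) - v (i+2)) / det2 (v (i-1) - v (i+1)) (v i - v (i+2))

/-- D_i = [v_{i-1}-v_i, v_i-v_{i+2}] / [v_{i-1}-v_{i+1}, v_i-v_{i+2}]. -/
def Dcoef (v : ℤ → ℝ × ℝ) (i : ℤ) : ℝ :=
  det2 (v (i-1) - v i) (v i - v (i+2)) / det2 (v (i-1) - v (i+1)) (v i - v (i+2))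

/-- The pentagram map: u_i = A_i v_i + B_i v_{i+2}, the intersection of the
diagonals (v_{i-1} v_{i+1}) and (v_i v_{i+2}). -/
def pent (v : ℤ → ℝ × ℝ) (i : ℤ) : ℝ × ℝ :=
  Acoef v i • v i + Bcoef v i • v (i+2)

lemma det2_smul_add_smul_smul (a b c : ℝ) (x y : ℝ × ℝ) :
    det2 (a • x + b • y) (c • y) = a * c * det2 x y := by
  simp only [det2, Prod.fst_add, Prod.snd_add, Prod.smul_fst, Prod.smul_snd, smul_eq_mul]
  ring

section Coefficients

variable (v : ℤ → ℝ × ℝ) (j : ℤ)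

lemma Bcoef_eq_one_sub_Acoef (h : det2 (v (j-1) - v (j+1)) (v j - v (j+2)) ≠ 0) :
    Bcoef v j = 1 - Acoef v j := by
  rw [Acoef, Bcoef, eq_sub_iff_add_eq, ← add_div, div_eq_one_iff_eq h]
  simp only [det2, Prod.fst_sub, Prod.snd_sub]
  ring

lemma Dcoef_eq_one_sub_Ccoef (h : det2 (v (j-1) - v (j+1)) (v j - v (j+2)) ≠ 0) :
    Dcoef v j = 1 - Ccoef v j := by
  rw [Ccoef, Dcoef, eq_sub_iff_add_eq, ← add_div, div_eq_one_iff_eq h]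
  simp only [det2, Prod.fst_sub, Prod.snd_sub]
  ring

lemma pent_eq_Ccoef_smul_add_Dcoef_smul :
    pent v j = Ccoef v j • v (j-1) + Dcoef v j • v (j+1) := by
  ext <;>
  · simp only [pent, Acoef, Bcoef, Ccoef, Dcoef, det2, Prod.fst_add, Prod.snd_add,
      Prod.smul_fst, Prod.smul_snd, Prod.fst_sub, Prod.snd_sub, smul_eq_mul]
    field_simp
    ring

end Coefficients

section Differences

variable (v : ℤ → ℝ × ℝ) (i : ℤ) (hden : ∀ j, det2 (v (j-1) - v (j+1)) (v j - v (j+2)) ≠ 0)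
include hden

lemma pent_succ_sub_pent_add_two :
    pent v (i+1) - pent v (i+2) = (Acoef v (i+1) - Ccoef v (i+2)) • (v (i+1) - v (i+3)) := by
  rw [pent_eq_Ccoef_smul_add_Dcoef_smul v (i+2), pent,
    Bcoef_eq_one_sub_Acoef v (i+1) (hden _), Dcoef_eq_one_sub_Ccoef v (i+2) (hden _),
    show i + 2 - 1 = i + 1 by ring, show i + 2 + 1 = i + 3 by ring,
    show i + 1 + 2 = i + 3 by ring]
  module

lemma pent_sub_pent_succ :
    pent v i - pent v (i+1)
      = Ccoef v i • (v (i-1) - v (i+1)) + Bcoef v (i+1) • (v (i+1) - v (i+3)) := by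
  rw [pent_eq_Ccoef_smul_add_Dcoef_smul v i, pent,
    Bcoef_eq_one_sub_Acoef v (i+1) (hden _), Dcoef_eq_one_sub_Ccoef v i (hden _),
    show i + 1 + 2 = i + 3 by ring]
  module

lemma pent_pred_sub_pent_succ :
    pent v (i-1) - pent v (i+1)
      = Acoef v (i-1) • (v (i-1) - v (i+1)) + Bcoef v (i+1) • (v (i+1) - v (i+3)) := by
  rw [pent, pent, Bcoef_eq_one_sub_Acoef v (i-1) (hden _),
    Bcoef_eq_one_sub_Acoef v (i+1) (hden _),
    show i - 1 + 2 = i + 1 by ring, show i + 1 + 2 = i + 3 by ring]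
  module

end Differences

theorem stmt4_general (v : ℤ → ℝ × ℝ) (i : ℤ)
    (hden : ∀ j, det2 (v (j-1) - v (j+1)) (v j - v (j+2)) ≠ 0)
    (hdenU : det2 (pent v (i-1) - pent v (i+1)) (pent v (i+1) - pent v (i+2)) ≠ 0) :
    det2 (pent v i - pent v (i+1)) (pent v (i+1) - pent v (i+2)) /
      det2 (pent v (i-1) - pent v (i+1)) (pent v (i+1) - pent v (i+2))
    = Ccoef v i / Acoef v (i-1) := by
  rw [pent_pred_sub_pent_succ v i hden, pent_succ_sub_pent_add_two v i hden,
    det2_smul_add_smul_smul] at hdenU ⊢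
  rw [mul_assoc] at hdenU
  rw [pent_sub_pent_succ v i hden, det2_smul_add_smul_smul, mul_assoc, mul_assoc]
  exact mul_div_mul_right _ _ (right_ne_zero_of_mul hdenU)

theorem stmt4 (v : ℤ → ℝ × ℝ) (i : ℤ)
    (hden : ∀ j, det2 (v (j-1) - v (j+1)) (v j - v (j+2)) ≠ 0)
    (hu : ∀ j, pent v j = Ccoef v j • v (j-1) + Dcoef v j • v (j+1))
    (hA : Acoef v (i-1) ≠ 0)
    (hdenU : det2 (pent v (i-1) - pent v (i+1)) (pent v (i+1) - pent v (i+2)) ≠ 0) :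
    det2 (pent v i - pent v (i+1)) (pent v (i+1) - pent v (i+2)) /
      det2 (pent v (i-1) - pent v (i+1)) (pent v (i+1) - pent v (i+2))
    = Ccoef v i / Acoef v (i-1) :=
  stmt4_general v i hden hdenU
end
end

section
/- (Schwartz's invariant) Let V = (v₁,…,vₙ) be a convex n-gon in general position with pentagram image U = T(V). Define f(V) = ∏_{i=1}^n (B_{i−1}·Cᵢ)/(A_{i−1}·Dᵢ), where Aᵢ, Bᵢ, Cᵢ, Dᵢ are the determinant ratios for V, and define f(T(V)) analogously using the polygon U. Then f(T(V)) = f(V); i.e., f is invariant under the pentagram map. -/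
noncomputable section

/-- Schwartz's invariant f(V) = ∏_{i=1}^n (B_{i-1} C_i)/(A_{i-1} D_i). -/
def pentInvariant (n : ℕ) (v : ℤ → ℝ × ℝ) : ℝ :=
  ∏ i ∈ Finset.range n, (Bcoef v ((i : ℤ) - 1) * Ccoef v (i : ℤ)) /
    (Acoef v ((i : ℤ) - 1) * Dcoef v (i : ℤ))

/-!
Write all coefficients through the edges `eᵢ = vᵢ - vᵢ₊₁` and the short diagonals
`sᵢ = vᵢ - vᵢ₊₂`: the common denominator `dᵢ = [sᵢ₋₁, sᵢ]` (`den`) cancels in each factor of `f`,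
and over a full period `f(V) = (∏ [eᵢ₋₁, eᵢ])² / (∏ [sᵢ₋₁, eᵢ₊₁] · ∏ [eᵢ₋₁, sᵢ])`.
The edges of `T(V)` are multiples `λᵢ sᵢ` (`edgeRatio`) of the short diagonals of `V`, so every
determinant of `T(V)` is a quadratic form in the `λᵢ`. Two Grassmann–Plücker relations factor the
numerators of `A` and `D` for `T(V)`, after which the `λᵢ`, the `dᵢ` and the determinants
`[sᵢ₋₁, sᵢ₊₁]` (`skipDen`) cancel in the products over a period.
-/

open Finset Function

lemma det2_add_left (x y z : ℝ × ℝ) : det2 (x + y) z = det2 x z + det2 y z := by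
  simp only [det2, Prod.fst_add, Prod.snd_add]; ring

lemma det2_add_right (x y z : ℝ × ℝ) : det2 x (y + z) = det2 x y + det2 x z := by
  simp only [det2, Prod.fst_add, Prod.snd_add]; ring

lemma det2_smul_left (a : ℝ) (x y : ℝ × ℝ) : det2 (a • x) y = a * det2 x y := by
  simp only [det2, Prod.smul_fst, Prod.smul_snd, smul_eq_mul]; ring

lemma det2_smul_right (a : ℝ) (x y : ℝ × ℝ) : det2 x (a • y) = a * det2 x y := by
  simp only [det2, Prod.smul_fst, Prod.smul_snd, smul_eq_mul]; ring

lemma det2_self (x : ℝ × ℝ) : det2 x x = 0 := by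
  simp only [det2]; ring

lemma prod_range_add_one_of_periodic {M : Type*} [CommMonoid M] {g : ℤ → M} {n : ℕ}
    (hg : Periodic g n) : ∏ i ∈ range n, g (i + 1) = ∏ i ∈ range n, g i := by
  cases n with
  | zero => simp
  | succ n =>
    rw [prod_range_succ, prod_range_succ']
    have hwrap : g ((n : ℤ) + 1) = g 0 := by simpa using hg 0
    simp only [Nat.cast_add, Nat.cast_one, Nat.cast_zero, hwrap]

lemma prod_range_add_of_periodic {M : Type*} [CommMonoid M] {g : ℤ → M} {n : ℕ}
    (hg : Periodic g n) (k : ℤ) : ∏ i ∈ range n, g (i + k) = ∏ i ∈ range n, g i := by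
  induction k using Int.induction_on with
  | zero => simp
  | succ k ih =>
    rw [← ih, ← prod_range_add_one_of_periodic (hg.add_const (k : ℤ))]
    exact prod_congr rfl fun i _ => by ring_nf
  | pred k ih =>
    rw [← ih, ← prod_range_add_one_of_periodic (hg.add_const (-(k : ℤ) - 1))]
    exact prod_congr rfl fun i _ => by ring_nf

lemma prod_range_sub_of_periodic {M : Type*} [CommMonoid M] {g : ℤ → M} {n : ℕ}
    (hg : Periodic g n) (k : ℤ) : ∏ i ∈ range n, g (i - k) = ∏ i ∈ range n, g i := by
  simpa only [sub_eq_add_neg] using prod_range_add_of_periodic hg (-k)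

namespace Pentagram

variable (w : ℤ → ℝ × ℝ)

def edge (i : ℤ) : ℝ × ℝ := w i - w (i + 1)

def diag (i : ℤ) : ℝ × ℝ := w i - w (i + 2)

def den (i : ℤ) : ℝ := det2 (diag w (i - 1)) (diag w i)

def skipDen (i : ℤ) : ℝ := det2 (diag w (i - 1)) (diag w (i + 1))

def Anum (i : ℤ) : ℝ := det2 (diag w (i - 1)) (edge w (i + 1))

def Bnum (i : ℤ) : ℝ := det2 (edge w (i - 1)) (edge w i)

def Dnum (i : ℤ) : ℝ := det2 (edge w (i - 1)) (diag w i)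

def edgeRatio (i : ℤ) : ℝ := Bnum w (i + 1) * skipDen w i / (den w i * den w (i + 1))

variable {w}

lemma den_eq (i : ℤ) : den w i = det2 (w (i - 1) - w (i + 1)) (w i - w (i + 2)) := by
  simp only [den, diag]; ring_nf

lemma Acoef_eq (i : ℤ) : Acoef w i = Anum w i / den w i := by
  simp only [Acoef, Anum, den, diag, edge]; ring_nf

lemma Bcoef_eq (i : ℤ) : Bcoef w i = Bnum w i / den w i := by
  simp only [Bcoef, Bnum, den, diag, edge]; ring_nf

lemma Ccoef_eq (i : ℤ) : Ccoef w i = Bnum w (i + 1) / den w i := by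
  simp only [Ccoef, Bnum, den, diag, edge]; ring_nf

lemma Dcoef_eq (i : ℤ) : Dcoef w i = Dnum w i / den w i := by
  simp only [Dcoef, Dnum, den, diag, edge]; ring_nf

lemma diag_eq_edge_add_edge (i : ℤ) : diag w i = edge w i + edge w (i + 1) := by
  simp only [diag, edge, add_assoc, one_add_one_eq_two]; abel

-- Both are Grassmann–Plücker relations `[a,b][c,d] - [a,c][b,d] + [a,d][b,c] = 0`, once the
-- diagonals are split into edges.
lemma Bnum_mul_skipDen_add_Bnum_mul_den (i : ℤ) :
    Bnum w i * skipDen w (i - 1) + Bnum w (i + 1) * den w (i - 1) = Anum w (i - 1) * den w i := by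
  simp only [Bnum, skipDen, Anum, den, diag, edge, det2, Prod.fst_sub, Prod.snd_sub]
  ring_nf

lemma Bnum_mul_den_add_Bnum_mul_skipDen (i : ℤ) :
    Bnum w (i + 1) * den w (i + 2) + Bnum w (i + 2) * skipDen w (i + 1)
      = Dnum w (i + 2) * den w (i + 1) := by
  simp only [Bnum, skipDen, Dnum, den, diag, edge, det2, Prod.fst_sub, Prod.snd_sub]
  ring_nf

section Periodic

variable {c : ℤ}

lemma periodic_det2 {f g : ℤ → ℝ × ℝ} (hf : Periodic f c) (hg : Periodic g c) :
    Periodic (fun i => det2 (f i) (g i)) c :=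
  fun i => congrArg₂ det2 (hf i) (hg i)

lemma edge_periodic (hw : Periodic w c) : Periodic (edge w) c :=
  fun i => congrArg₂ (· - ·) (hw i) (hw.add_const 1 i)

lemma diag_periodic (hw : Periodic w c) : Periodic (diag w) c :=
  fun i => congrArg₂ (· - ·) (hw i) (hw.add_const 2 i)

lemma den_periodic (hw : Periodic w c) : Periodic (den w) c :=
  periodic_det2 ((diag_periodic hw).sub_const 1) (diag_periodic hw)

lemma skipDen_periodic (hw : Periodic w c) : Periodic (skipDen w) c :=
  periodic_det2 ((diag_periodic hw).sub_const 1) ((diag_periodic hw).add_const 1)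

lemma Anum_periodic (hw : Periodic w c) : Periodic (Anum w) c :=
  periodic_det2 ((diag_periodic hw).sub_const 1) ((edge_periodic hw).add_const 1)

lemma Bnum_periodic (hw : Periodic w c) : Periodic (Bnum w) c :=
  periodic_det2 ((edge_periodic hw).sub_const 1) (edge_periodic hw)

lemma Dnum_periodic (hw : Periodic w c) : Periodic (Dnum w) c :=
  periodic_det2 ((edge_periodic hw).sub_const 1) (diag_periodic hw)

lemma edgeRatio_periodic (hw : Periodic w c) : Periodic (edgeRatio w) c :=
  (((Bnum_periodic hw).add_const 1).mul (skipDen_periodic hw)).div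
    ((den_periodic hw).mul ((den_periodic hw).add_const 1))

lemma pent_periodic (hw : Periodic w c) : Periodic (pent w) c := fun i => by
  have hw2 : w (i + c + 2) = w (i + 2) := hw.add_const 2 i
  simp only [pent, Acoef_eq, Bcoef_eq, Anum_periodic hw i, Bnum_periodic hw i, den_periodic hw i,
    hw i, hw2]

end Periodic

lemma pentInvariant_eq {n : ℕ} (hw : Periodic w n) (hden : ∀ i, den w i ≠ 0) :
    pentInvariant n w = (∏ i ∈ range n, Bnum w i) ^ 2 /
      ((∏ i ∈ range n, Anum w i) * ∏ i ∈ range n, Dnum w i) := by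
  have factor (i : ℤ) : Bcoef w (i - 1) * Ccoef w i / (Acoef w (i - 1) * Dcoef w i)
      = Bnum w (i - 1) * Bnum w (i + 1) / (Anum w (i - 1) * Dnum w i) := by
    rw [Bcoef_eq, Ccoef_eq, Acoef_eq, Dcoef_eq, div_mul_div_comm, div_mul_div_comm,
      div_div_div_cancel_right₀ (mul_ne_zero (hden _) (hden _))]
  simp only [pentInvariant, factor, prod_div_distrib, prod_mul_distrib]
  rw [prod_range_sub_of_periodic (Bnum_periodic hw), prod_range_add_of_periodic (Bnum_periodic hw),
    prod_range_sub_of_periodic (Anum_periodic hw), sq]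

section Image

variable (hden : ∀ i, den w i ≠ 0)
include hden

lemma edge_pent (i : ℤ) : edge (pent w) i = edgeRatio w i • diag w i := by
  have h0 := hden i
  have h1 := hden (i + 1)
  simp only [pent, edgeRatio, Acoef, Bcoef, Bnum, skipDen, den, diag, edge, add_sub_cancel_right,
    add_assoc, one_add_one_eq_two, show (1 : ℤ) + 2 = 3 by norm_num,
    show i - 1 + 2 = i + 1 by ring] at h0 h1 ⊢
  simp only [det2, Prod.fst_sub, Prod.snd_sub] at h0 h1
  ext <;>
  · simp only [det2, Prod.fst_sub, Prod.snd_sub, Prod.fst_add, Prod.snd_add, Prod.smul_fst,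
      Prod.smul_snd, smul_eq_mul]
    field_simp
    ring

lemma diag_pent (i : ℤ) :
    diag (pent w) i = edgeRatio w i • diag w i + edgeRatio w (i + 1) • diag w (i + 1) := by
  rw [diag_eq_edge_add_edge, edge_pent hden, edge_pent hden]

lemma Bnum_pent (i : ℤ) : Bnum (pent w) i = edgeRatio w (i - 1) * edgeRatio w i * den w i := by
  simp only [Bnum, den, edge_pent hden, det2_smul_left, det2_smul_right]; ring

lemma den_pent (i : ℤ) :
    den (pent w) i = edgeRatio w (i - 1) * edgeRatio w i * den w i
      + edgeRatio w (i - 1) * edgeRatio w (i + 1) * skipDen w i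
      + edgeRatio w i * edgeRatio w (i + 1) * den w (i + 1) := by
  simp only [den, skipDen, diag_pent hden, sub_add_cancel, add_sub_cancel_right, det2_add_left,
    det2_add_right, det2_smul_left, det2_smul_right, det2_self]
  ring

lemma Anum_pent (i : ℤ) :
    Anum (pent w) i = edgeRatio w (i + 1) * (Anum w (i - 1) * skipDen w i / den w (i - 1)) := by
  have hexpand : Anum (pent w) i = edgeRatio w (i + 1) *
      (edgeRatio w (i - 1) * skipDen w i + edgeRatio w i * den w (i + 1)) := by
    simp only [Anum, skipDen, den, diag_pent hden, edge_pent hden, sub_add_cancel,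
      add_sub_cancel_right, det2_add_left, det2_smul_left, det2_smul_right]
  rw [hexpand]
  congr 1
  simp only [edgeRatio, sub_add_cancel]
  field_simp [hden (i - 1), hden i, hden (i + 1)]
  linear_combination skipDen w i * Bnum_mul_skipDen_add_Bnum_mul_den (w := w) i

lemma Dnum_pent (i : ℤ) :
    Dnum (pent w) i = edgeRatio w (i - 1) * (Dnum w (i + 2) * skipDen w i / den w (i + 2)) := by
  have hexpand : Dnum (pent w) i = edgeRatio w (i - 1) *
      (edgeRatio w i * den w i + edgeRatio w (i + 1) * skipDen w i) := by
    simp only [Dnum, skipDen, den, diag_pent hden, edge_pent hden, det2_add_right, det2_smul_left,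
      det2_smul_right]
    ring
  rw [hexpand]
  congr 1
  simp only [edgeRatio, add_assoc, one_add_one_eq_two]
  field_simp [hden i, hden (i + 1), hden (i + 2)]
  linear_combination skipDen w i * Bnum_mul_den_add_Bnum_mul_skipDen (w := w) i

lemma skipDen_ne_zero (hdenT : ∀ i, den (pent w) i ≠ 0) (i : ℤ) : skipDen w i ≠ 0 := by
  intro h
  have hratio : edgeRatio w i = 0 := by rw [edgeRatio, h, mul_zero, zero_div]
  apply hdenT i
  rw [den_pent hden, h, hratio]
  ring

end Image

section Products

variable {n : ℕ} (hw : Periodic w n)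
include hw

lemma prod_edgeRatio :
    ∏ i ∈ range n, edgeRatio w i = (∏ i ∈ range n, Bnum w i) * (∏ i ∈ range n, skipDen w i) /
      (∏ i ∈ range n, den w i) ^ 2 := by
  simp only [edgeRatio, prod_div_distrib, prod_mul_distrib]
  rw [prod_range_add_of_periodic (Bnum_periodic hw), prod_range_add_of_periodic (den_periodic hw),
    sq]

variable (hden : ∀ i, den w i ≠ 0)
include hden

lemma prod_Bnum_pent :
    ∏ i ∈ range n, Bnum (pent w) i =
      (∏ i ∈ range n, edgeRatio w i) ^ 2 * ∏ i ∈ range n, den w i := by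
  simp only [Bnum_pent hden, prod_mul_distrib]
  rw [prod_range_sub_of_periodic (edgeRatio_periodic hw), sq]

lemma prod_Anum_pent :
    ∏ i ∈ range n, Anum (pent w) i = (∏ i ∈ range n, edgeRatio w i) *
      ((∏ i ∈ range n, Anum w i) * (∏ i ∈ range n, skipDen w i) / ∏ i ∈ range n, den w i) := by
  simp only [Anum_pent hden, prod_mul_distrib, prod_div_distrib]
  rw [prod_range_add_of_periodic (edgeRatio_periodic hw),
    prod_range_sub_of_periodic (Anum_periodic hw), prod_range_sub_of_periodic (den_periodic hw)]

lemma prod_Dnum_pent :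
    ∏ i ∈ range n, Dnum (pent w) i = (∏ i ∈ range n, edgeRatio w i) *
      ((∏ i ∈ range n, Dnum w i) * (∏ i ∈ range n, skipDen w i) / ∏ i ∈ range n, den w i) := by
  simp only [Dnum_pent hden, prod_mul_distrib, prod_div_distrib]
  rw [prod_range_sub_of_periodic (edgeRatio_periodic hw),
    prod_range_add_of_periodic (Dnum_periodic hw), prod_range_add_of_periodic (den_periodic hw)]

theorem pentInvariant_pent (hdenT : ∀ i, den (pent w) i ≠ 0) :
    pentInvariant n (pent w) = pentInvariant n w := by
  rw [pentInvariant_eq (pent_periodic hw) hdenT, pentInvariant_eq hw hden, prod_Bnum_pent hw hden,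
    prod_Anum_pent hw hden, prod_Dnum_pent hw hden, prod_edgeRatio hw]
  have hdenProd : ∏ i ∈ range n, den w i ≠ 0 := prod_ne_zero_iff.mpr fun i _ => hden i
  have hskipProd : ∏ i ∈ range n, skipDen w i ≠ 0 :=
    prod_ne_zero_iff.mpr fun i _ => skipDen_ne_zero hden hdenT i
  field_simp

end Products

end Pentagram

theorem stmt6_general (n : ℕ) (v : ℤ → ℝ × ℝ)
    (hper : ∀ i : ℤ, v (i + n) = v i)
    (hden : ∀ j, det2 (v (j-1) - v (j+1)) (v j - v (j+2)) ≠ 0)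
    (hdenU : ∀ j, det2 (pent v (j-1) - pent v (j+1)) (pent v j - pent v (j+2)) ≠ 0) :
    pentInvariant n (pent v) = pentInvariant n v :=
  Pentagram.pentInvariant_pent hper (fun i => Pentagram.den_eq i ▸ hden i)
    (fun i => Pentagram.den_eq i ▸ hdenU i)

theorem stmt6 (n : ℕ) (hn : 5 ≤ n) (v : ℤ → ℝ × ℝ)
    (hper : ∀ i : ℤ, v (i + n) = v i)
    (hden : ∀ j, det2 (v (j-1) - v (j+1)) (v j - v (j+2)) ≠ 0)
    (hdenU : ∀ j, det2 (pent v (j-1) - pent v (j+1)) (pent v j - pent v (j+2)) ≠ 0)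
    (hA : ∀ j, Acoef v j ≠ 0) (hB : ∀ j, Bcoef v j ≠ 0)
    (hC : ∀ j, Ccoef v j ≠ 0) (hD : ∀ j, Dcoef v j ≠ 0) :
    pentInvariant n (pent v) = pentInvariant n v :=
  stmt6_general n v hper hden hdenU
end
end

section
/- Let γ: ℝ → ℝ² be smooth with [γ'(x), γ''(x)] ≠ 0, set W(x) = [γ'(x), γ'''(x)]/[γ'(x), γ''(x)], and for n ∈ ℕ define points vⱼ = γ(x + (j−i)/n) for j near i. Let B_{i+k} = [v_{i+k−1}−v_{i+k}, v_{i+k}−v_{i+k+1}]/[v_{i+k−1}−v_{i+k+1}, v_{i+k}−v_{i+k+2}] for bounded k. Then B_{i+k} = 1/4 − W(x)/(8n) + O(1/n²) as n → ∞. -/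
/-! With `h = 1/n`, every chord `γ (x + s h) - γ (x + s' h)` agrees up to `O(h⁴)` with the
corresponding chord of the cubic Taylor polynomial `P` of `γ` at `x`, and the chords of `P` are
`O(h)`. Hence both determinants agree up to `O(h⁵)` with those built from `P`, which bilinearity
computes exactly: `h³[γ', γ''] + k h⁴[γ', γ'''] + O(h⁵)` and
`4h³[γ', γ''] + (4k + 2) h⁴[γ', γ'''] + O(h⁵)`. Since `[γ', γ''] ≠ 0` the denominator is of exact
order `h³`, and expanding the quotient gives `1/4 - W h / 8 + O(h²)`. -/

open Filter Asymptotics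

noncomputable section

/-- W = [γ', γ'''] / [γ', γ'']. -/
def Wc (γ : ℝ → ℝ × ℝ) (t : ℝ) : ℝ :=
  det2 (deriv γ t) (iteratedDeriv 3 γ t) / det2 (deriv γ t) (iteratedDeriv 2 γ t)

open Topology

lemma abs_det2_le (u v : ℝ × ℝ) : |det2 u v| ≤ 2 * ‖u‖ * ‖v‖ := by
  have h₁ : |u.1| ≤ ‖u‖ := norm_fst_le u
  have h₂ : |u.2| ≤ ‖u‖ := norm_snd_le u
  have h₃ : |v.1| ≤ ‖v‖ := norm_fst_le v
  have h₄ : |v.2| ≤ ‖v‖ := norm_snd_le v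
  calc |det2 u v| ≤ |u.1| * |v.2| + |u.2| * |v.1| := by
        rw [det2, ← abs_mul, ← abs_mul]; exact abs_sub _ _
    _ ≤ ‖u‖ * ‖v‖ + ‖u‖ * ‖v‖ := by gcongr
    _ = 2 * ‖u‖ * ‖v‖ := by ring

lemma Asymptotics.IsBigO.det2 {α : Type*} {l : Filter α} {f g : α → ℝ × ℝ} {u v : α → ℝ}
    (hf : f =O[l] u) (hg : g =O[l] v) :
    (fun t => _root_.det2 (f t) (g t)) =O[l] fun t => u t * v t := by
  refine (IsBigO.of_bound 2 (Eventually.of_forall fun t => ?_)).trans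
    (hf.norm_left.mul hg.norm_left)
  rw [Real.norm_eq_abs, Real.norm_eq_abs, abs_mul, abs_norm, abs_norm, ← mul_assoc]
  exact abs_det2_le _ _

lemma isBigO_det2_add_sub_det2 {α : Type*} {l : Filter α} {p₁ p₂ e₁ e₂ : α → ℝ × ℝ}
    {u v : α → ℝ} (hp₁ : p₁ =O[l] u) (hp₂ : p₂ =O[l] u) (he₁ : e₁ =O[l] v) (he₂ : e₂ =O[l] v)
    (hvu : v =O[l] u) :
    (fun t => det2 (p₁ t + e₁ t) (p₂ t + e₂ t) - det2 (p₁ t) (p₂ t)) =O[l]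
      fun t => u t * v t := by
  have h₁ : (fun t => det2 (p₁ t) (e₂ t)) =O[l] fun t => u t * v t := hp₁.det2 he₂
  have h₂ : (fun t => det2 (e₁ t) (p₂ t + e₂ t)) =O[l] fun t => u t * v t :=
    (he₁.det2 (hp₂.add (he₂.trans hvu))).congr_right fun t => mul_comm _ _
  refine (h₁.add h₂).congr_left fun t => ?_
  simp only [det2, Prod.fst_add, Prod.snd_add]
  ring

lemma isBigO_comp_const_mul {E : Type*} [SeminormedAddCommGroup E] {f : ℝ → E} {m : ℕ}
    (hf : f =O[𝓝 0] fun t => t ^ m) (s : ℝ) :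
    (fun h => f (s * h)) =O[𝓝 0] fun h => h ^ m := by
  have hs : Tendsto (fun h : ℝ => s * h) (𝓝 0) (𝓝 0) := by
    simpa using (continuous_const_mul s).tendsto 0
  refine (hf.comp_tendsto hs).trans ?_
  simpa only [Function.comp_def, mul_pow] using
    (isBigO_refl (fun h : ℝ => h ^ m) _).const_mul_left (s ^ m)

lemma isBigO_div_sub_of_isBigO_sub_mul {α : Type*} {l : Filter α} {f g L u v : α → ℝ}
    (hfg : (fun t => f t - L t * g t) =O[l] fun t => u t * v t) (hv : v =O[l] g)
    (hv₀ : ∀ᶠ t in l, v t ≠ 0) :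
    (fun t => f t / g t - L t) =O[l] u := by
  have hg₀ : ∀ᶠ t in l, g t ≠ 0 := by
    filter_upwards [hv.eq_zero_imp, hv₀] with t hvg hvt hgt using hvt (hvg hgt)
  have hinv : (fun t => (g t)⁻¹) =O[l] fun t => (v t)⁻¹ :=
    hv.inv_rev (hv₀.mono fun t hvt hvt' => absurd hvt' hvt)
  refine (hfg.mul hinv).congr' ?_ ?_
  · filter_upwards [hg₀] with t hgt
    field_simp
  · filter_upwards [hv₀] with t hvt
    field_simp

lemma isBigO_div_sub_quarter {N D : ℝ → ℝ} {A B k : ℝ} (hA : A ≠ 0)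
    (hN : (fun h => N h - (h ^ 3 * A + k * h ^ 4 * B)) =O[𝓝 0] fun h => h ^ 5)
    (hD : (fun h => D h - (4 * h ^ 3 * A + (4 * k + 2) * h ^ 4 * B)) =O[𝓝 0] fun h => h ^ 5) :
    (fun h => N h / D h - (1 / 4 - B / A * h / 8)) =O[𝓝[≠] 0] fun h => h ^ 2 := by
  have hL : (fun h : ℝ => 1 / 4 - B / A * h / 8) =O[𝓝 0] fun _ => (1 : ℝ) :=
    (Continuous.tendsto (by fun_prop) 0).isBigO_one ℝ
  -- for the leading parts `N₀`, `D₀`: `N₀ - (1/4 - B h / (8A)) D₀ = (4k + 2) B² / (8A) · h⁵`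
  have hquintic := isBigO_const_mul_self ((4 * k + 2) * B ^ 2 / (8 * A)) (fun h : ℝ => h ^ 5) (𝓝 0)
  have hmain : (fun h => N h - (1 / 4 - B / A * h / 8) * D h) =O[𝓝 0] fun h => h ^ 5 := by
    refine ((hN.sub ((hL.mul hD).congr_right fun h => one_mul _)).add hquintic).congr_left
      fun h => ?_
    field_simp
    ring
  have hcubic : (fun h : ℝ => h ^ 3) =O[𝓝 0] fun h => 4 * A * h ^ 3 :=
    isBigO_self_const_mul (mul_ne_zero four_ne_zero hA) _ _
  have hrest : (fun h => D h - 4 * A * h ^ 3) =o[𝓝 0] fun h => h ^ 3 := by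
    have h₄ : (fun h : ℝ => (4 * k + 2) * B * h ^ 4) =o[𝓝 0] fun h => h ^ 3 :=
      (isLittleO_pow_pow (by norm_num)).const_mul_left _
    refine ((hD.trans_isLittleO (isLittleO_pow_pow (by norm_num))).add h₄).congr_left
      fun h => by ring
  have hD₃ : (fun h : ℝ => h ^ 3) =O[𝓝 0] D :=
    hcubic.trans <| (hrest.trans_isBigO hcubic).right_isBigO_add.congr_right fun h => by ring
  refine isBigO_div_sub_of_isBigO_sub_mul (v := fun h => h ^ 3)
    ((hmain.mono nhdsWithin_le_nhds).congr_right fun h => by ring)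
    (hD₃.mono nhdsWithin_le_nhds) ?_
  filter_upwards [self_mem_nhdsWithin] with h hh using pow_ne_zero 3 hh

def cubicJet (a b c : ℝ × ℝ) (t : ℝ) : ℝ × ℝ := t • a + (t ^ 2 / 2) • b + (t ^ 3 / 6) • c

lemma cubicJet_isBigO (a b c : ℝ × ℝ) : cubicJet a b c =O[𝓝 0] fun t => t := by
  have hv : (fun t : ℝ => a + (t / 2) • b + (t ^ 2 / 6) • c) =O[𝓝 0] fun _ => (1 : ℝ) :=
    (Continuous.tendsto (by fun_prop) 0).isBigO_one ℝ
  refine ((isBigO_refl (fun t : ℝ => t) _).smul hv).congr (fun t => ?_) (fun t => by simp)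
  simp only [cubicJet]
  module

lemma ContDiff.isBigO_sub_cubicJet {γ : ℝ → ℝ × ℝ} (hγ : ContDiff ℝ 4 γ) (x : ℝ) :
    (fun t => γ (x + t) - γ x - cubicJet (deriv γ x) (iteratedDeriv 2 γ x)
      (iteratedDeriv 3 γ x) t) =O[𝓝 0] fun t => t ^ 4 := by
  have hx : Tendsto (fun t : ℝ => x + t) (𝓝 0) (𝓝 x) := by
    simpa using (continuous_const_add x).tendsto 0
  have hrem : (fun t => γ (x + t) - taylorWithinEval γ 4 Set.univ x (x + t)) =O[𝓝 0]
      fun t => t ^ 4 :=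
    ((taylor_isLittleO_univ (by exact_mod_cast hγ)).comp_tendsto hx).isBigO.congr_right
      fun t => by simp
  have hquartic : (fun t : ℝ => (t ^ 4 / 24) • iteratedDeriv 4 γ x) =O[𝓝 0] fun t => t ^ 4 := by
    have h := ((isBigO_refl (fun t : ℝ => t ^ 4) _).const_mul_left (1 / 24)).smul
      (isBigO_const_one ℝ (iteratedDeriv 4 γ x) (𝓝 0))
    exact h.congr (fun t => by module) (fun t => by simp)
  refine (hrem.add hquartic).congr_left fun t => ?_
  simp only [taylor_within_apply, Finset.sum_range_succ, Finset.sum_range_zero,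
    iteratedDerivWithin_univ, iteratedDeriv_zero, iteratedDeriv_one, cubicJet, Nat.factorial]
  module

lemma isBigO_det2_chords_sub {f P : ℝ → ℝ × ℝ} (hP : P =O[𝓝 0] fun t => t)
    (hfP : (fun t => f t - P t) =O[𝓝 0] fun t => t ^ 4) (s₁ s₂ s₃ s₄ : ℝ) :
    (fun h => det2 (f (s₁ * h) - f (s₂ * h)) (f (s₃ * h) - f (s₄ * h))
      - det2 (P (s₁ * h) - P (s₂ * h)) (P (s₃ * h) - P (s₄ * h))) =O[𝓝 0] fun h => h ^ 5 := by
  have hP' : ∀ s, (fun h => P (s * h)) =O[𝓝 0] fun h => h := fun s => by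
    simpa only [pow_one] using isBigO_comp_const_mul (m := 1) (by simpa only [pow_one] using hP) s
  have hE : ∀ s, (fun h => f (s * h) - P (s * h)) =O[𝓝 0] fun h => h ^ 4 :=
    isBigO_comp_const_mul hfP
  have h4 : (fun h : ℝ => h ^ 4) =O[𝓝 0] fun h => h := by
    simpa using (isLittleO_pow_pow (𝕜 := ℝ) (m := 1) (n := 4) (by norm_num)).isBigO
  refine (isBigO_det2_add_sub_det2 ((hP' s₁).sub (hP' s₂)) ((hP' s₃).sub (hP' s₄))
    ((hE s₁).sub (hE s₂)) ((hE s₃).sub (hE s₄)) h4).congr (fun h => ?_) (fun h => by ring)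
  congr 2 <;> abel

lemma det2_cubicJet_chords_numerator (a b c : ℝ × ℝ) (k h : ℝ) :
    det2 (cubicJet a b c ((k - 1) * h) - cubicJet a b c (k * h))
      (cubicJet a b c (k * h) - cubicJet a b c ((k + 1) * h)) =
      h ^ 3 * det2 a b + k * h ^ 4 * det2 a c + (3 * k ^ 2 - 1) / 6 * det2 b c * h ^ 5 := by
  simp only [det2, cubicJet, Prod.fst_add, Prod.snd_add, Prod.fst_sub, Prod.snd_sub, Prod.smul_fst,
    Prod.smul_snd, smul_eq_mul]
  ring

lemma det2_cubicJet_chords_denominator (a b c : ℝ × ℝ) (k h : ℝ) :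
    det2 (cubicJet a b c ((k - 1) * h) - cubicJet a b c ((k + 1) * h))
      (cubicJet a b c (k * h) - cubicJet a b c ((k + 2) * h)) =
      4 * h ^ 3 * det2 a b + (4 * k + 2) * h ^ 4 * det2 a c
        + (2 * k ^ 2 + 2 * k - 2 / 3) * det2 b c * h ^ 5 := by
  simp only [det2, cubicJet, Prod.fst_add, Prod.snd_add, Prod.fst_sub, Prod.snd_sub, Prod.smul_fst,
    Prod.smul_snd, smul_eq_mul]
  ring

lemma isBigO_det2_chords_numerator {f : ℝ → ℝ × ℝ} {a b c : ℝ × ℝ}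
    (hf : (fun t => f t - cubicJet a b c t) =O[𝓝 0] fun t => t ^ 4) (k : ℝ) :
    (fun h => det2 (f ((k - 1) * h) - f (k * h)) (f (k * h) - f ((k + 1) * h))
      - (h ^ 3 * det2 a b + k * h ^ 4 * det2 a c)) =O[𝓝 0] fun h => h ^ 5 := by
  have hchords := isBigO_det2_chords_sub (cubicJet_isBigO a b c) hf (k - 1) k k (k + 1)
  simp only [det2_cubicJet_chords_numerator] at hchords
  exact (hchords.add (isBigO_const_mul_self ((3 * k ^ 2 - 1) / 6 * det2 b c) _ _)).congr_left
    fun h => by ring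

lemma isBigO_det2_chords_denominator {f : ℝ → ℝ × ℝ} {a b c : ℝ × ℝ}
    (hf : (fun t => f t - cubicJet a b c t) =O[𝓝 0] fun t => t ^ 4) (k : ℝ) :
    (fun h => det2 (f ((k - 1) * h) - f ((k + 1) * h)) (f (k * h) - f ((k + 2) * h))
      - (4 * h ^ 3 * det2 a b + (4 * k + 2) * h ^ 4 * det2 a c)) =O[𝓝 0] fun h => h ^ 5 := by
  have hchords := isBigO_det2_chords_sub (cubicJet_isBigO a b c) hf (k - 1) (k + 1) k (k + 2)
  simp only [det2_cubicJet_chords_denominator] at hchords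
  exact (hchords.add
    (isBigO_const_mul_self ((2 * k ^ 2 + 2 * k - 2 / 3) * det2 b c) _ _)).congr_left
    fun h => by ring

theorem stmt9 (γ : ℝ → ℝ × ℝ) (hγ : ContDiff ℝ 4 γ) (x : ℝ)
    (hnd : det2 (deriv γ x) (iteratedDeriv 2 γ x) ≠ 0) (k : ℝ) :
    (fun n : ℕ =>
        det2 (γ (x + (k - 1) / n) - γ (x + k / n)) (γ (x + k / n) - γ (x + (k + 1) / n)) /
          det2 (γ (x + (k - 1) / n) - γ (x + (k + 1) / n)) (γ (x + k / n) - γ (x + (k + 2) / n))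
        - (1 / 4 - Wc γ x / (8 * n)))
      =O[atTop] fun n : ℕ => (1 : ℝ) / (n : ℝ) ^ 2 := by
  have hf := hγ.isBigO_sub_cubicJet x
  have hratio := isBigO_div_sub_quarter hnd (isBigO_det2_chords_numerator hf k)
    (isBigO_det2_chords_denominator hf k)
  simp only [sub_sub_sub_cancel_right] at hratio
  have hinv : Tendsto (fun n : ℕ => 1 / (n : ℝ)) atTop (𝓝[≠] 0) :=
    tendsto_nhdsWithin_of_tendsto_nhds_of_eventually_within _ tendsto_one_div_atTop_nhds_zero_nat
      ((eventually_ne_atTop 0).mono fun n hn => by simpa using hn)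
  refine (hratio.comp_tendsto hinv).congr (fun n => ?_) (fun n => by simp)
  simp only [Function.comp_def, mul_one_div, Wc]
  ring
end
end

section
/- With the pentagram setup on points vⱼ in general position and image uⱼ = Aⱼvⱼ + Bⱼv_{j+2} = Cⱼv_{j−1} + Dⱼv_{j+1}, the exact algebraic identity holds: [u_{i−1}−uᵢ, uᵢ−u_{i+1}] / [u_{i−1}−u_{i+1}, uᵢ−u_{i+2}] = (Dᵢ − B_{i−1})·B_{i+1} / (A_{i−1}·(D_{i+2} − B_{i+1}) + B_{i+1}·(Dᵢ − B_{i−1})). -/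
noncomputable section

/-!
Write `eⱼ = vⱼ - v_{j+2}` for the diagonals and `δⱼ = uⱼ - u_{j+1}` for the sides of the image
polygon. Since `uⱼ` lies on the diagonals `eⱼ` and `e_{j-1}`, `δⱼ = (D_{j+1} - Bⱼ) eⱼ`, and going
through the vertex `v_{j+1}` also gives `δⱼ = Cⱼ e_{j-1} + B_{j+1} e_{j+1}`. So `δ_{i-1}`, `δᵢ`,
`δ_{i+1}` are explicit combinations of `e_{i-1}` and `e_{i+1}`, both determinants are multiples
of `[e_{i-1}, e_{i+1}]`, and the ratio follows from `A_{i-1} = (Dᵢ - B_{i-1}) + Cᵢ`.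
-/

section Pentagram

variable {v : ℤ → ℝ × ℝ}

theorem Acoef_add_Bcoef {j : ℤ} (hj : det2 (v (j-1) - v (j+1)) (v j - v (j+2)) ≠ 0) :
    Acoef v j + Bcoef v j = 1 := by
  rw [Acoef, Bcoef, ← add_div, div_eq_one_iff_eq hj]
  simp only [det2, Prod.fst_sub, Prod.snd_sub]
  ring

theorem Ccoef_add_Dcoef {j : ℤ} (hj : det2 (v (j-1) - v (j+1)) (v j - v (j+2)) ≠ 0) :
    Ccoef v j + Dcoef v j = 1 := by
  rw [Ccoef, Dcoef, ← add_div, div_eq_one_iff_eq hj]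
  simp only [det2, Prod.fst_sub, Prod.snd_sub]
  ring

theorem pent_eq_sub_Bcoef_smul {j : ℤ} (hj : det2 (v (j-1) - v (j+1)) (v j - v (j+2)) ≠ 0) :
    pent v j = v j - Bcoef v j • (v j - v (j+2)) := by
  rw [pent]
  linear_combination (norm := module) Acoef_add_Bcoef hj • v j

theorem pent_eq_add_Ccoef_smul {j : ℤ} (hj : det2 (v (j-1) - v (j+1)) (v j - v (j+2)) ≠ 0) :
    pent v j = v (j+1) + Ccoef v j • (v (j-1) - v (j+1)) := by
  ext <;>
  · simp only [pent, Acoef, Bcoef, Ccoef, Prod.fst_add, Prod.snd_add, Prod.smul_fst,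
      Prod.smul_snd, Prod.fst_sub, Prod.snd_sub, smul_eq_mul]
    field_simp
    simp only [det2, Prod.fst_sub, Prod.snd_sub]
    ring

-- The indices are passed as equations so that the lemma applies at `i - 1` and `i + 1` as is.
theorem pent_sub_pent_eq_smul (hden : ∀ j, det2 (v (j-1) - v (j+1)) (v j - v (j+2)) ≠ 0)
    {j k l : ℤ} (hk : k = j + 1) (hl : l = j + 2) :
    pent v j - pent v k = (Dcoef v k - Bcoef v j) • (v j - v l) := by
  subst hk hl
  rw [pent_eq_sub_Bcoef_smul (hden j), pent_eq_add_Ccoef_smul (hden (j+1)), add_sub_cancel_right,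
    add_assoc, one_add_one_eq_two]
  linear_combination (norm := module) Ccoef_add_Dcoef (hden (j+1)) • (v (j+2) - v j)

theorem pent_sub_pent_add_one_eq_add (hden : ∀ j, det2 (v (j-1) - v (j+1)) (v j - v (j+2)) ≠ 0)
    (j : ℤ) :
    pent v j - pent v (j+1) =
      Ccoef v j • (v (j-1) - v (j+1)) + Bcoef v (j+1) • (v (j+1) - v (j+3)) := by
  rw [pent_eq_add_Ccoef_smul (hden j), pent_eq_sub_Bcoef_smul (hden (j+1)),
    show j + 1 + 2 = j + 3 by ring]
  abel

end Pentagram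

theorem det2_div_det2_add_add (x y : ℝ × ℝ) (a b c d : ℝ)
    (h : det2 (a • x + (c • x + b • y)) (c • x + b • y + d • y) ≠ 0) :
    det2 (a • x) (c • x + b • y) / det2 (a • x + (c • x + b • y)) (c • x + b • y + d • y)
      = a * b / ((a + c) * d + b * a) := by
  have hnum : det2 (a • x) (c • x + b • y) = a * b * det2 x y := by
    simp only [det2, Prod.fst_add, Prod.snd_add, Prod.smul_fst, Prod.smul_snd, smul_eq_mul]
    ring
  have hden : det2 (a • x + (c • x + b • y)) (c • x + b • y + d • y)
      = ((a + c) * d + b * a) * det2 x y := by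
    simp only [det2, Prod.fst_add, Prod.snd_add, Prod.smul_fst, Prod.smul_snd, smul_eq_mul]
    ring
  rw [hden] at h ⊢
  rw [hnum, mul_div_mul_right _ _ (right_ne_zero_of_mul h)]

theorem stmt14_general (v : ℤ → ℝ × ℝ) (i : ℤ)
    (hden : ∀ j, det2 (v (j-1) - v (j+1)) (v j - v (j+2)) ≠ 0)
    (hdenU : det2 (pent v (i-1) - pent v (i+1)) (pent v i - pent v (i+2)) ≠ 0) :
    det2 (pent v (i-1) - pent v i) (pent v i - pent v (i+1)) /
      det2 (pent v (i-1) - pent v (i+1)) (pent v i - pent v (i+2))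
    = (Dcoef v i - Bcoef v (i-1)) * Bcoef v (i+1) /
      (Acoef v (i-1) * (Dcoef v (i+2) - Bcoef v (i+1))
        + Bcoef v (i+1) * (Dcoef v i - Bcoef v (i-1))) := by
  have hA : Acoef v (i-1) = Dcoef v i - Bcoef v (i-1) + Ccoef v i := by
    have hAB := Acoef_add_Bcoef (hden (i-1))
    have hCD := Ccoef_add_Dcoef (hden i)
    linarith
  rw [← sub_add_sub_cancel (pent v (i-1)) (pent v i) (pent v (i+1)),
    ← sub_add_sub_cancel (pent v i) (pent v (i+1)) (pent v (i+2)),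
    pent_sub_pent_eq_smul hden (j := i-1) (k := i) (l := i+1) (by ring) (by ring),
    pent_sub_pent_add_one_eq_add hden i,
    pent_sub_pent_eq_smul hden (j := i+1) (k := i+2) (l := i+3) (by ring) (by ring)]
    at hdenU ⊢
  rw [hA]
  exact det2_div_det2_add_add _ _ _ _ _ _ hdenU

theorem stmt14 (v : ℤ → ℝ × ℝ) (i : ℤ)
    (hden : ∀ j, det2 (v (j-1) - v (j+1)) (v j - v (j+2)) ≠ 0)
    (hu : ∀ j, pent v j = Ccoef v j • v (j-1) + Dcoef v j • v (j+1))
    (hdenU : det2 (pent v (i-1) - pent v (i+1)) (pent v i - pent v (i+2)) ≠ 0)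
    (hdenR : Acoef v (i-1) * (Dcoef v (i+2) - Bcoef v (i+1))
        + Bcoef v (i+1) * (Dcoef v i - Bcoef v (i-1)) ≠ 0) :
    det2 (pent v (i-1) - pent v i) (pent v i - pent v (i+1)) /
      det2 (pent v (i-1) - pent v (i+1)) (pent v i - pent v (i+2))
    = (Dcoef v i - Bcoef v (i-1)) * Bcoef v (i+1) /
      (Acoef v (i-1) * (Dcoef v (i+2) - Bcoef v (i+1))
        + Bcoef v (i+1) * (Dcoef v i - Bcoef v (i-1))) :=
  stmt14_general v i hden hdenU
end
end

section
/- Let pᵢ be the intersection of the lines (v_{i−2}v_{i+1}) and (v_{i−1}v_{i+2}), where vⱼ = γ(j/n) for a smooth curve γ with [γ', γ''] ≠ 0 and W = [γ', γ''']/[γ', γ'']. Then n²·(pᵢ − γ(i/n)) = γ''(i/n) − (2/3)·W(i/n)·γ'(i/n) + O(1/n) as n → ∞. -/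
/-!
Put `h = 1/n` and take the chords `a, b, c, d` from `v_i` to `v_{i-2}, v_{i+1}, v_{i-1}, v_{i+2}`.
Cramer's rule gives `Δ • (p - v_i) = N` with `Δ = [b - a, d - c]` and
`N = [c, d] (b - a) - [a, b] (d - c)`. Both are bilinear in chords of size `O(h)`, so replacing
each chord by its cubic Taylor jet (error `O(h⁴)`) moves `Δ` by `O(h⁵)` and `N` by `O(h⁶)`.
For the jets themselves, the symmetry of the stencil kills the `h⁴` term of `Δ` and the `h⁴`
term of `N`: `Δ = 9h³[γ', γ''] + O(h⁵)` and
`N = 9h⁵[γ', γ''] (γ'' - (2/3) W γ') + O(h⁷)`.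
Dividing, `n² (p - v_i) = γ'' - (2/3) W γ' + O(h)`.
-/

open Filter Asymptotics

noncomputable section

open Set Topology
open scoped Nat

section Taylor

variable {E : Type*} [NormedAddCommGroup E] [NormedSpace ℝ E] [CompleteSpace E]

theorem norm_sub_taylor_le {f : ℝ → E} {m : ℕ} (hf : ContDiff ℝ (m + 1 : ℕ) f)
    {M t u : ℝ} (hM : ∀ y ∈ uIcc t (t + u), ‖iteratedDeriv (m + 1) f y‖ ≤ M) :
    ‖f (t + u) - ∑ k ∈ Finset.range (m + 1), (u ^ k / k !) • iteratedDeriv k f t‖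
      ≤ M * |u| ^ (m + 1) / m ! := by
  rcases eq_or_ne u 0 with rfl | hu
  · simp [Finset.sum_range_succ']
  set s := uIcc t (t + u)
  have hs : UniqueDiffOn ℝ s := uniqueDiffOn_uIcc (by simpa using hu)
  have hderiv : ∀ k ≤ m + 1, ∀ y ∈ s, iteratedDerivWithin k f s y = iteratedDeriv k f y :=
    fun k hk y hy =>
      iteratedDerivWithin_eq_iteratedDeriv hs (hf.contDiffAt.of_le (by exact_mod_cast hk)) hy
  have hrem := taylor_integral_remainder (hf.contDiffOn (s := s))
  rw [taylor_within_apply] at hrem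
  have hsum : ∑ k ∈ Finset.range (m + 1), ((k ! : ℝ)⁻¹ * (t + u - t) ^ k) •
      iteratedDerivWithin k f s t =
        ∑ k ∈ Finset.range (m + 1), (u ^ k / k !) • iteratedDeriv k f t := by
    refine Finset.sum_congr rfl fun k hk => ?_
    rw [hderiv k (by simp at hk; omega) t left_mem_uIcc, add_sub_cancel_left, inv_mul_eq_div]
  rw [← hsum, hrem]
  have hbound : ∀ y ∈ uIoc t (t + u),
      ‖((t + u - y) ^ m / m !) • iteratedDerivWithin (m + 1) f s y‖
        ≤ |u| ^ m / m ! * M := by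
    intro y hy
    have hy' : y ∈ s := uIoc_subset_uIcc hy
    rw [hderiv _ le_rfl y hy', norm_smul, norm_div, norm_pow, Real.norm_eq_abs, RCLike.norm_natCast]
    gcongr ?_ ^ m / _ * ?_
    · simpa using abs_sub_right_of_mem_uIcc hy'
    · exact hM y hy'
  calc _ ≤ |u| ^ m / m ! * M * |t + u - t| :=
        intervalIntegral.norm_integral_le_of_norm_le_const hbound
    _ = M * |u| ^ (m + 1) / m ! := by rw [add_sub_cancel_left]; ring

theorem taylor_remainder_isBigO {α : Type*} {l : Filter α} {f : ℝ → E} {m : ℕ}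
    (hf : ContDiff ℝ (m + 1 : ℕ) f) {t u : α → ℝ} {a : ℝ} (ht : Tendsto t l (𝓝 a))
    (hu : Tendsto u l (𝓝 0)) :
    (fun n => f (t n + u n)
        - ∑ k ∈ Finset.range (m + 1), (u n ^ k / k !) • iteratedDeriv k f (t n))
      =O[l] fun n => u n ^ (m + 1) := by
  obtain ⟨M, hM⟩ := (isCompact_Icc (a := a - 2) (b := a + 2)).exists_bound_of_continuousOn
    (hf.continuous_iteratedDeriv (m + 1) le_rfl).continuousOn
  have ht' : ∀ᶠ n in l, t n ∈ Icc (a - 1) (a + 1) :=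
    ht.eventually_mem (Icc_mem_nhds (by linarith) (by linarith))
  have hu' : ∀ᶠ n in l, u n ∈ Icc (-1 : ℝ) 1 :=
    hu.eventually_mem (Icc_mem_nhds (by norm_num) (by norm_num))
  refine IsBigO.of_bound (M / m !) ?_
  filter_upwards [ht', hu'] with n ⟨ht₁, ht₂⟩ ⟨hu₁, hu₂⟩
  have hsub : uIcc (t n) (t n + u n) ⊆ Icc (a - 2) (a + 2) :=
    uIcc_subset_Icc ⟨by linarith, by linarith⟩ ⟨by linarith, by linarith⟩
  rw [norm_pow, Real.norm_eq_abs, div_mul_eq_mul_div]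
  exact norm_sub_taylor_le hf fun y hy => hM y (hsub hy)

end Taylor

theorem isBoundedBilinearMap_det2 :
    IsBoundedBilinearMap ℝ fun p : (ℝ × ℝ) × (ℝ × ℝ) => det2 p.1 p.2 where
  add_left _ _ _ := by simp only [det2, Prod.fst_add, Prod.snd_add]; ring
  smul_left _ _ _ := by simp only [det2, Prod.smul_fst, Prod.smul_snd, smul_eq_mul]; ring
  add_right _ _ _ := by simp only [det2, Prod.fst_add, Prod.snd_add]; ring
  smul_right _ _ _ := by simp only [det2, Prod.smul_fst, Prod.smul_snd, smul_eq_mul]; ring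
  bound := ⟨2, two_pos, fun u v => calc
    ‖det2 u v‖ ≤ ‖u.1‖ * ‖v.2‖ + ‖u.2‖ * ‖v.1‖ := by
      simpa only [det2, norm_mul] using norm_sub_le (u.1 * v.2) (u.2 * v.1)
    _ ≤ ‖u‖ * ‖v‖ + ‖u‖ * ‖v‖ := by
      gcongr
      exacts [norm_fst_le u, norm_snd_le v, norm_snd_le u, norm_fst_le v]
    _ = 2 * ‖u‖ * ‖v‖ := by ring⟩

def intersectionDenom (a b c d : ℝ × ℝ) : ℝ := det2 (b - a) (d - c)

def intersectionNumer (a b c d : ℝ × ℝ) : ℝ × ℝ :=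
  det2 c d • (b - a) - det2 a b • (d - c)

theorem intersectionDenom_smul_eq {q a b c d : ℝ × ℝ} (hab : det2 (q - a) (b - a) = 0)
    (hcd : det2 (q - c) (d - c) = 0) :
    intersectionDenom a b c d • q = intersectionNumer a b c d := by
  simp only [det2, Prod.fst_sub, Prod.snd_sub] at hab hcd
  ext <;> simp only [intersectionDenom, intersectionNumer, det2, Prod.smul_fst, Prod.smul_snd,
    Prod.fst_sub, Prod.snd_sub, smul_eq_mul]
  · linear_combination (c.1 - d.1) * hab + (b.1 - a.1) * hcd
  · linear_combination (c.2 - d.2) * hab + (b.2 - a.2) * hcd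

def taylorJet (g₁ g₂ g₃ : ℝ × ℝ) (h s : ℝ) : ℝ × ℝ :=
  (s * h) • g₁ + (s ^ 2 / 2 * h ^ 2) • g₂ + (s ^ 3 / 6 * h ^ 3) • g₃

section TaylorJet

variable (g₁ g₂ g₃ : ℝ × ℝ) (h : ℝ)

theorem det2_taylorJet (s r : ℝ) :
    det2 (taylorJet g₁ g₂ g₃ h s) (taylorJet g₁ g₂ g₃ h r) =
      ((s * r ^ 2 - s ^ 2 * r) / 2 * h ^ 3) * det2 g₁ g₂
        + ((s * r ^ 3 - s ^ 3 * r) / 6 * h ^ 4) * det2 g₁ g₃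
        + ((s ^ 2 * r ^ 3 - s ^ 3 * r ^ 2) / 12 * h ^ 5) * det2 g₂ g₃ := by
  simp only [taylorJet, det2, Prod.fst_add, Prod.snd_add, Prod.smul_fst, Prod.smul_snd,
    smul_eq_mul]
  ring

theorem intersectionDenom_taylorJet :
    intersectionDenom (taylorJet g₁ g₂ g₃ h (-2)) (taylorJet g₁ g₂ g₃ h 1)
        (taylorJet g₁ g₂ g₃ h (-1)) (taylorJet g₁ g₂ g₃ h 2) =
      h ^ 3 * (9 * det2 g₁ g₂) - (9 / 2 * h ^ 5) * det2 g₂ g₃ := by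
  simp only [intersectionDenom, taylorJet, det2, Prod.fst_add, Prod.snd_add, Prod.fst_sub,
    Prod.snd_sub, Prod.smul_fst, Prod.smul_snd, smul_eq_mul]
  ring

theorem intersectionNumer_taylorJet :
    intersectionNumer (taylorJet g₁ g₂ g₃ h (-2)) (taylorJet g₁ g₂ g₃ h 1)
        (taylorJet g₁ g₂ g₃ h (-1)) (taylorJet g₁ g₂ g₃ h 2) =
      h ^ 5 • ((9 * det2 g₁ g₂) • g₂ - (6 * det2 g₁ g₃) • g₁)
        - (3 * h ^ 7) • (det2 g₁ g₃ • g₃ + det2 g₂ g₃ • g₂) := by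
  ext <;> simp only [intersectionNumer, taylorJet, det2, Prod.fst_add, Prod.snd_add,
    Prod.fst_sub, Prod.snd_sub, Prod.smul_fst, Prod.smul_snd, smul_eq_mul] <;> ring

end TaylorJet

section Asymptotics

variable {α : Type*} {l : Filter α} {h : α → ℝ}

theorem pow_isBigO_pow_of_le (hh : h =O[l] fun _ => (1 : ℝ)) {j k : ℕ} (hjk : j ≤ k) :
    (fun n => h n ^ k) =O[l] fun n => h n ^ j := by
  simpa [← pow_add, Nat.sub_add_cancel hjk] using
    (hh.pow (k - j)).mul (isBigO_refl (fun n => h n ^ j) l)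

theorem const_mul_pow_smul_isBigO {E : Type*} [NormedAddCommGroup E] [NormedSpace ℝ E]
    (hh : h =O[l] fun _ => (1 : ℝ)) {g : α → E} (hg : g =O[l] fun _ => (1 : ℝ)) (c : ℝ)
    {j k : ℕ} (hjk : j ≤ k) :
    (fun n => (c * h n ^ k) • g n) =O[l] fun n => h n ^ j := by
  have := ((isBigO_refl (fun n => h n ^ k) l).const_mul_left c).smul hg
  exact (by simpa using this : _ =O[l] fun n => h n ^ k).trans (pow_isBigO_pow_of_le hh hjk)

theorem IsBoundedBilinearMap.sub_isBigO_pow {E F G : Type*} [NormedAddCommGroup E]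
    [NormedSpace ℝ E] [NormedAddCommGroup F] [NormedSpace ℝ F] [NormedAddCommGroup G]
    [NormedSpace ℝ G] {f : E × F → G} (hf : IsBoundedBilinearMap ℝ f)
    (hh : h =O[l] fun _ => (1 : ℝ)) {x x₀ : α → E} {y y₀ : α → F} {j k m : ℕ}
    (hx₀ : x₀ =O[l] fun n => h n ^ j)
    (hx : (fun n => x n - x₀ n) =O[l] fun n => h n ^ (j + m))
    (hy₀ : y₀ =O[l] fun n => h n ^ k)
    (hy : (fun n => y n - y₀ n) =O[l] fun n => h n ^ (k + m)) :
    (fun n => f (x n, y n) - f (x₀ n, y₀ n)) =O[l] fun n => h n ^ (j + k + m) := by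
  have hprod : ∀ {a b : ℕ} {u : α → E} {v : α → F}, j + k + m ≤ a + b →
      u =O[l] (fun n => h n ^ a) → v =O[l] (fun n => h n ^ b) →
      (fun n => f (u n, v n)) =O[l] fun n => h n ^ (j + k + m) := fun hab hu hv =>
    hf.isBigO_comp.trans ((hu.norm_left.mul hv.norm_left).trans
      (by simpa only [← pow_add] using pow_isBigO_pow_of_le hh hab))
  have hsplit : ∀ n, f (x n, y n) - f (x₀ n, y₀ n) =
      f (x n - x₀ n, y n - y₀ n) + f (x n - x₀ n, y₀ n) + f (x₀ n, y n - y₀ n) := by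
    intro n
    simp only [hf.map_sub_left, hf.map_sub_right]; abel
  simp only [hsplit]
  exact ((hprod (by omega) hx hy).add (hprod (by omega) hx hy₀)).add (hprod (by omega) hx₀ hy)

theorem det2_isBigO_one {u v : α → ℝ × ℝ} (hu : u =O[l] fun _ => (1 : ℝ))
    (hv : v =O[l] fun _ => (1 : ℝ)) : (fun n => det2 (u n) (v n)) =O[l] fun _ => (1 : ℝ) := by
  simpa using isBoundedBilinearMap_det2.isBigO_comp.trans (hu.norm_left.mul hv.norm_left)

end Asymptotics

section JetAsymptotics

variable {α : Type*} {l : Filter α} {h : α → ℝ} {g₁ g₂ g₃ : α → ℝ × ℝ}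

theorem taylorJet_isBigO (hh : h =O[l] fun _ => (1 : ℝ)) (hg₁ : g₁ =O[l] fun _ => (1 : ℝ))
    (hg₂ : g₂ =O[l] fun _ => (1 : ℝ)) (hg₃ : g₃ =O[l] fun _ => (1 : ℝ)) (s : ℝ) :
    (fun n => taylorJet (g₁ n) (g₂ n) (g₃ n) (h n) s) =O[l] fun n => h n ^ 1 := by
  have := ((const_mul_pow_smul_isBigO hh hg₁ s le_rfl).add
    (const_mul_pow_smul_isBigO hh hg₂ (s ^ 2 / 2) (by norm_num : 1 ≤ 2))).add
    (const_mul_pow_smul_isBigO hh hg₃ (s ^ 3 / 6) (by norm_num : 1 ≤ 3))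
  simpa only [taylorJet, pow_one] using this

theorem det2_taylorJet_isBigO (hh : h =O[l] fun _ => (1 : ℝ))
    (hg₁ : g₁ =O[l] fun _ => (1 : ℝ)) (hg₂ : g₂ =O[l] fun _ => (1 : ℝ))
    (hg₃ : g₃ =O[l] fun _ => (1 : ℝ)) (s r : ℝ) :
    (fun n => det2 (taylorJet (g₁ n) (g₂ n) (g₃ n) (h n) s)
      (taylorJet (g₁ n) (g₂ n) (g₃ n) (h n) r)) =O[l] fun n => h n ^ 3 := by
  simp only [det2_taylorJet]
  exact ((const_mul_pow_smul_isBigO hh (det2_isBigO_one hg₁ hg₂) _ le_rfl).add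
    (const_mul_pow_smul_isBigO hh (det2_isBigO_one hg₁ hg₃) _ (by norm_num))).add
    (const_mul_pow_smul_isBigO hh (det2_isBigO_one hg₂ hg₃) _ (by norm_num))

variable {a b c d : α → ℝ × ℝ}

theorem intersectionDenom_sub_isBigO (hh : h =O[l] fun _ => (1 : ℝ))
    (hg₁ : g₁ =O[l] fun _ => (1 : ℝ)) (hg₂ : g₂ =O[l] fun _ => (1 : ℝ))
    (hg₃ : g₃ =O[l] fun _ => (1 : ℝ))
    (ha : (fun n => a n - taylorJet (g₁ n) (g₂ n) (g₃ n) (h n) (-2)) =O[l] fun n => h n ^ 4)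
    (hb : (fun n => b n - taylorJet (g₁ n) (g₂ n) (g₃ n) (h n) 1) =O[l] fun n => h n ^ 4)
    (hc : (fun n => c n - taylorJet (g₁ n) (g₂ n) (g₃ n) (h n) (-1)) =O[l] fun n => h n ^ 4)
    (hd : (fun n => d n - taylorJet (g₁ n) (g₂ n) (g₃ n) (h n) 2) =O[l] fun n => h n ^ 4) :
    (fun n => intersectionDenom (a n) (b n) (c n) (d n) - h n ^ 3 * (9 * det2 (g₁ n) (g₂ n)))
      =O[l] fun n => h n ^ 4 := by
  set J := fun s n => taylorJet (g₁ n) (g₂ n) (g₃ n) (h n) s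
  have hJ := taylorJet_isBigO hh hg₁ hg₂ hg₃
  have hpert := isBoundedBilinearMap_det2.sub_isBigO_pow hh (m := 3)
    (x := fun n => b n - a n) (x₀ := fun n => J 1 n - J (-2) n)
    (y := fun n => d n - c n) (y₀ := fun n => J 2 n - J (-1) n)
    ((hJ 1).sub (hJ (-2))) ((hb.sub ha).congr_left fun n => by abel)
    ((hJ 2).sub (hJ (-1))) ((hd.sub hc).congr_left fun n => by abel)
  have hmodel :=
    const_mul_pow_smul_isBigO hh (det2_isBigO_one hg₂ hg₃) (9 / 2) (by norm_num : 4 ≤ 5)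
  refine ((hpert.trans (pow_isBigO_pow_of_le hh (by norm_num))).sub hmodel).congr_left fun n => ?_
  have := intersectionDenom_taylorJet (g₁ n) (g₂ n) (g₃ n) (h n)
  simp only [J, intersectionDenom, smul_eq_mul] at this ⊢
  linear_combination -this

theorem intersectionNumer_sub_isBigO (hh : h =O[l] fun _ => (1 : ℝ))
    (hg₁ : g₁ =O[l] fun _ => (1 : ℝ)) (hg₂ : g₂ =O[l] fun _ => (1 : ℝ))
    (hg₃ : g₃ =O[l] fun _ => (1 : ℝ))
    (ha : (fun n => a n - taylorJet (g₁ n) (g₂ n) (g₃ n) (h n) (-2)) =O[l] fun n => h n ^ 4)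
    (hb : (fun n => b n - taylorJet (g₁ n) (g₂ n) (g₃ n) (h n) 1) =O[l] fun n => h n ^ 4)
    (hc : (fun n => c n - taylorJet (g₁ n) (g₂ n) (g₃ n) (h n) (-1)) =O[l] fun n => h n ^ 4)
    (hd : (fun n => d n - taylorJet (g₁ n) (g₂ n) (g₃ n) (h n) 2) =O[l] fun n => h n ^ 4) :
    (fun n => intersectionNumer (a n) (b n) (c n) (d n)
        - h n ^ 5 •
          ((9 * det2 (g₁ n) (g₂ n)) • g₂ n - (6 * det2 (g₁ n) (g₃ n)) • g₁ n))
      =O[l] fun n => h n ^ 6 := by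
  set J := fun s n => taylorJet (g₁ n) (g₂ n) (g₃ n) (h n) s
  have hJ := taylorJet_isBigO hh hg₁ hg₂ hg₃
  have hdet := det2_taylorJet_isBigO hh hg₁ hg₂ hg₃
  have hside : ∀ {u v : α → ℝ × ℝ} {s r : ℝ},
      (fun n => u n - J s n) =O[l] (fun n => h n ^ 4) →
      (fun n => v n - J r n) =O[l] (fun n => h n ^ 4) →
      (fun n => (v n - u n) - (J r n - J s n)) =O[l] fun n => h n ^ (1 + 2) := fun hu hv =>
    ((hv.sub hu).congr_left fun n => by abel).trans (pow_isBigO_pow_of_le hh (by norm_num))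
  have hpert : ∀ {u v w z : α → ℝ × ℝ} {s r s' r' : ℝ},
      (fun n => u n - J s n) =O[l] (fun n => h n ^ 4) →
      (fun n => v n - J r n) =O[l] (fun n => h n ^ 4) →
      (fun n => w n - J s' n) =O[l] (fun n => h n ^ 4) →
      (fun n => z n - J r' n) =O[l] (fun n => h n ^ 4) →
      (fun n => det2 (w n) (z n) • (v n - u n) - det2 (J s' n) (J r' n) • (J r n - J s n))
        =O[l] fun n => h n ^ (3 + 1 + 2) := fun {u v w z s r s' r'} hu hv hw hz =>
    isBoundedBilinearMap_smul.sub_isBigO_pow hh (hdet s' r')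
      (isBoundedBilinearMap_det2.sub_isBigO_pow hh (m := 3) (hJ s') hw (hJ r') hz)
      ((hJ r).sub (hJ s)) (hside hu hv)
  have hbdd : (fun n => det2 (g₁ n) (g₃ n) • g₃ n + det2 (g₂ n) (g₃ n) • g₂ n)
      =O[l] fun _ => (1 : ℝ) := by
    simpa using
      ((det2_isBigO_one hg₁ hg₃).smul hg₃).add ((det2_isBigO_one hg₂ hg₃).smul hg₂)
  have hmodel := const_mul_pow_smul_isBigO hh hbdd 3 (by norm_num : 6 ≤ 7)
  refine (((hpert ha hb hc hd).sub (hpert hc hd ha hb)).sub hmodel).congr_left fun n => ?_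
  have := intersectionNumer_taylorJet (g₁ n) (g₂ n) (g₃ n) (h n)
  simp only [J, intersectionNumer] at this ⊢
  linear_combination (norm := module) -this

end JetAsymptotics

theorem inv_sq_smul_sub_isBigO {α E : Type*} [NormedAddCommGroup E] [NormedSpace ℝ E]
    {l : Filter α} {h Δ K : α → ℝ} {K₀ : ℝ} {q N V : α → E}
    (hh : Tendsto h l (𝓝 0)) (hh₀ : ∀ᶠ n in l, h n ≠ 0) (hK : Tendsto K l (𝓝 K₀))
    (hK₀ : K₀ ≠ 0) (hV : V =O[l] fun _ => (1 : ℝ))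
    (hΔ : (fun n => Δ n - h n ^ 3 * K n) =O[l] fun n => h n ^ 4)
    (hN : (fun n => N n - (h n ^ 5 * K n) • V n) =O[l] fun n => h n ^ 6)
    (hq : ∀ n, Δ n • q n = N n) :
    (fun n => (h n ^ 2)⁻¹ • q n - V n) =O[l] h := by
  set x := fun n => (h n ^ 2)⁻¹ • q n - V n
  have hK' : (fun _ => (1 : ℝ)) =O[l] K := by
    rw [isBigO_const_left_iff_pos_le_norm one_ne_zero]
    refine ⟨‖K₀‖ / 2, by positivity, ?_⟩
    filter_upwards [hK.norm.eventually (lt_mem_nhds (half_lt_self (norm_pos_iff.mpr hK₀)))]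
      with n hn using hn.le
  have hmain : (fun n => h n ^ 3) =O[l] fun n => h n ^ 3 * K n := by
    simpa using (isBigO_refl (fun n => h n ^ 3) l).mul hK'
  have hsmall : (fun n => h n ^ 4) =o[l] fun n => h n ^ 3 :=
    (((isLittleO_one_iff ℝ).mpr hh).mul_isBigO (isBigO_refl (fun n => h n ^ 3) l)).congr
      (fun n => by ring) (fun n => by ring)
  have hΔ_lower : (fun n => h n ^ 3) =O[l] Δ :=
    hmain.trans (((hΔ.trans_isLittleO hsmall).trans_isBigO hmain).right_isBigO_add.congr_right
      fun n => by ring)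
  have hΔx : (fun n => Δ n • x n) =O[l] fun n => h n ^ 4 := by
    have hN' :
        (fun n => (h n ^ 2)⁻¹ • (N n - (h n ^ 5 * K n) • V n)) =O[l] fun n => h n ^ 4 :=
      ((isBigO_refl (fun n => (h n ^ 2)⁻¹) l).smul hN).congr' EventuallyEq.rfl
        (by filter_upwards [hh₀] with n hn; simp only [smul_eq_mul]; field_simp)
    have hΔV : (fun n => (Δ n - h n ^ 3 * K n) • V n) =O[l] fun n => h n ^ 4 := by
      simpa using hΔ.smul hV
    refine (hN'.sub hΔV).congr' ?_ EventuallyEq.rfl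
    filter_upwards [hh₀] with n hn
    have : (h n ^ 2)⁻¹ * (h n ^ 5 * K n) = h n ^ 3 * K n := by field_simp
    simp only [x, ← hq, smul_sub, smul_smul, this, mul_comm (Δ n)]
    module
  have hx := (isBigO_refl (fun n => (h n ^ 3)⁻¹) l).smul
    ((hΔ_lower.smul (isBigO_refl x l)).trans hΔx)
  refine hx.congr' ?_ ?_
  · filter_upwards [hh₀] with n hn
    rw [smul_smul, inv_mul_cancel₀ (pow_ne_zero 3 hn), one_smul]
  · filter_upwards [hh₀] with n hn
    simp only [smul_eq_mul]
    field_simp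

section Curve

variable {γ : ℝ → ℝ × ℝ}

theorem Continuous.tendsto_comp_intCast_div {E : Type*} [TopologicalSpace E] {F : ℝ → E}
    (hF : Continuous F) (i : ℤ) : Tendsto (fun n : ℕ => F ((i : ℝ) / n)) atTop (𝓝 (F 0)) :=
  (hF.tendsto 0).comp (tendsto_const_div_atTop_nhds_zero_nat (i : ℝ))

theorem continuous_det2_deriv_iteratedDeriv (hγ : ContDiff ℝ 4 γ) {k : ℕ} (hk : k ≤ 4) :
    Continuous fun t => det2 (deriv γ t) (iteratedDeriv k γ t) :=
  isBoundedBilinearMap_det2.continuous.comp ((hγ.continuous_deriv (by norm_num)).prodMk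
    (hγ.continuous_iteratedDeriv k (by exact_mod_cast hk)))

theorem continuous_Wc (hγ : ContDiff ℝ 4 γ)
    (hnd : ∀ t, det2 (deriv γ t) (iteratedDeriv 2 γ t) ≠ 0) : Continuous (Wc γ) :=
  (continuous_det2_deriv_iteratedDeriv hγ (by norm_num)).div
    (continuous_det2_deriv_iteratedDeriv hγ (by norm_num)) hnd

theorem det2_smul_sub_Wc_smul {t : ℝ} (hK : det2 (deriv γ t) (iteratedDeriv 2 γ t) ≠ 0) :
    (9 * det2 (deriv γ t) (iteratedDeriv 2 γ t)) • iteratedDeriv 2 γ t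
        - (6 * det2 (deriv γ t) (iteratedDeriv 3 γ t)) • deriv γ t
      = (9 * det2 (deriv γ t) (iteratedDeriv 2 γ t)) •
          (iteratedDeriv 2 γ t - (2 / 3 * Wc γ t) • deriv γ t) := by
  rw [smul_sub, smul_smul, Wc]
  congr 2
  field_simp
  ring

/-- `chord γ i s n = v_{i+s} - v_i` for the sampled polygon `v_j = γ (j / n)`. -/
def chord (γ : ℝ → ℝ × ℝ) (i : ℤ) (s : ℝ) (n : ℕ) : ℝ × ℝ :=
  γ (((i : ℝ) + s) / n) - γ ((i : ℝ) / n)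

theorem chord_sub_taylorJet_isBigO (hγ : ContDiff ℝ 4 γ) (i : ℤ) (s : ℝ) :
    (fun n : ℕ => chord γ i s n
        - taylorJet (deriv γ ((i : ℝ) / n)) (iteratedDeriv 2 γ ((i : ℝ) / n))
            (iteratedDeriv 3 γ ((i : ℝ) / n)) (n : ℝ)⁻¹ s)
      =O[atTop] fun n => ((n : ℝ)⁻¹) ^ 4 := by
  have hu : Tendsto (fun n : ℕ => s * (n : ℝ)⁻¹) atTop (𝓝 0) := by
    simpa using tendsto_inv_atTop_nhds_zero_nat.const_mul s
  have htaylor := taylor_remainder_isBigO (m := 3) (by exact_mod_cast hγ)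
    (tendsto_const_div_atTop_nhds_zero_nat (i : ℝ)) hu
  refine (htaylor.trans ?_).congr_left fun n => ?_
  · simpa only [mul_pow] using
      (isBigO_refl (fun n : ℕ => ((n : ℝ)⁻¹) ^ 4) atTop).const_mul_left _
  · rw [chord, show (i : ℝ) / n + s * (n : ℝ)⁻¹ = ((i : ℝ) + s) / n by ring]
    simp only [Finset.sum_range_succ, Finset.sum_range_zero, taylorJet, iteratedDeriv_zero,
      iteratedDeriv_one, Nat.factorial]
    module

theorem intersection_chords_expansion (hγ : ContDiff ℝ 4 γ)
    (hnd : ∀ t, det2 (deriv γ t) (iteratedDeriv 2 γ t) ≠ 0) (i : ℤ) :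
    (fun n : ℕ => intersectionDenom (chord γ i (-2) n) (chord γ i 1 n) (chord γ i (-1) n)
        (chord γ i 2 n)
          - ((n : ℝ)⁻¹) ^ 3 * (9 * det2 (deriv γ (i / n)) (iteratedDeriv 2 γ (i / n))))
      =O[atTop] (fun n => ((n : ℝ)⁻¹) ^ 4) ∧
    (fun n : ℕ => intersectionNumer (chord γ i (-2) n) (chord γ i 1 n) (chord γ i (-1) n)
        (chord γ i 2 n)
          - (((n : ℝ)⁻¹) ^ 5 * (9 * det2 (deriv γ (i / n)) (iteratedDeriv 2 γ (i / n))))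
            • (iteratedDeriv 2 γ (i / n) - (2 / 3 * Wc γ (i / n)) • deriv γ (i / n)))
      =O[atTop] (fun n => ((n : ℝ)⁻¹) ^ 6) := by
  have hh : (fun n : ℕ => (n : ℝ)⁻¹) =O[atTop] fun _ => (1 : ℝ) :=
    tendsto_inv_atTop_nhds_zero_nat.isBigO_one ℝ
  have hg : ∀ k ≤ 4,
      (fun n : ℕ => iteratedDeriv k γ ((i : ℝ) / n)) =O[atTop] fun _ => (1 : ℝ) :=
    fun k hk => ((hγ.continuous_iteratedDeriv k (by exact_mod_cast hk)).tendsto_comp_intCast_div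
      i).isBigO_one ℝ
  have hg₁ : (fun n : ℕ => deriv γ ((i : ℝ) / n)) =O[atTop] fun _ => (1 : ℝ) := by
    simpa using hg 1 (by norm_num)
  have hchord := chord_sub_taylorJet_isBigO hγ i
  refine ⟨intersectionDenom_sub_isBigO hh hg₁ (hg 2 (by norm_num)) (hg 3 (by norm_num))
    (hchord _) (hchord _) (hchord _) (hchord _), ?_⟩
  refine (intersectionNumer_sub_isBigO hh hg₁ (hg 2 (by norm_num)) (hg 3 (by norm_num))
    (hchord _) (hchord _) (hchord _) (hchord _)).congr_left fun n => ?_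
  rw [det2_smul_sub_Wc_smul (hnd _), smul_smul]

end Curve

theorem stmt17 (γ : ℝ → ℝ × ℝ) (hγ : ContDiff ℝ 4 γ)
    (hnd : ∀ t, det2 (deriv γ t) (iteratedDeriv 2 γ t) ≠ 0)
    (i : ℤ) (p : ℕ → ℝ × ℝ)
    (hp1 : ∀ n : ℕ, det2 (p n - γ (((i:ℝ) - 2) / n)) (γ (((i:ℝ) + 1) / n) - γ (((i:ℝ) - 2) / n)) = 0)
    (hp2 : ∀ n : ℕ, det2 (p n - γ (((i:ℝ) - 1) / n)) (γ (((i:ℝ) + 2) / n) - γ (((i:ℝ) - 1) / n)) = 0) :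
    (fun n : ℕ =>
        (n:ℝ)^2 • (p n - γ ((i:ℝ) / n))
          - (iteratedDeriv 2 γ ((i:ℝ)/n) - (2/3 * Wc γ ((i:ℝ)/n)) • deriv γ ((i:ℝ)/n)))
      =O[atTop] fun n : ℕ => (1:ℝ)/(n:ℝ) := by
  obtain ⟨hΔ, hN⟩ := intersection_chords_expansion hγ hnd i
  have hK := ((continuous_det2_deriv_iteratedDeriv hγ (k := 2) (by norm_num)).const_mul
    9).tendsto_comp_intCast_div i
  have hVcont : Continuous fun t => iteratedDeriv 2 γ t - (2 / 3 * Wc γ t) • deriv γ t := by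
    have := continuous_Wc hγ hnd
    have := hγ.continuous_deriv (by norm_num)
    have := hγ.continuous_iteratedDeriv 2 (by norm_num)
    fun_prop
  have hq : ∀ n : ℕ, intersectionDenom (chord γ i (-2) n) (chord γ i 1 n) (chord γ i (-1) n)
      (chord γ i 2 n) • (p n - γ ((i : ℝ) / n)) = intersectionNumer (chord γ i (-2) n)
        (chord γ i 1 n) (chord γ i (-1) n) (chord γ i 2 n) := fun n =>
    intersectionDenom_smul_eq
      (by simpa only [chord, sub_sub_sub_cancel_right, ← sub_eq_add_neg] using hp1 n)
      (by simpa only [chord, sub_sub_sub_cancel_right, ← sub_eq_add_neg] using hp2 n)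
  have key := inv_sq_smul_sub_isBigO tendsto_inv_atTop_nhds_zero_nat
    ((eventually_ne_atTop 0).mono fun n hn => by simpa using hn) hK
    (mul_ne_zero (by norm_num) (hnd 0)) ((hVcont.tendsto_comp_intCast_div i).isBigO_one ℝ)
    hΔ hN hq
  simpa [one_div] using key
end
end
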